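/- Let τ ∈ ℂ with Im τ > 0 and λ, κ ∈ ℂ satisfy ϑ₁(λ,τ) ≠ 0, ϑ₁(κ,τ) ≠ 0, ϑ₁(κ+λ,τ) ≠ 0, ϑ₁(κ−λ,τ) ≠ 0, and 2κ ∉ ℤ + τℤ. Define G(z,μ) = ϑ₁′(0,τ)·ϑ₁(z+μ,τ)/(ϑ₁(z,τ)·ϑ₁(μ,τ)). Then there is no ρ ∈ ℂ such that G(z,λ)·G(−z,λ) = (G(z,κ) + ρ)·(G(−z,κ) + ρ) for all z ∈ ℂ with ϑ₁(z,τ) ≠ 0. (Equivalently, the elliptic Shibukawa–Ueno operator 𝓡^e(λ) has no eigenvalues; this is the key step showing it has no finite-dimensional invariant subspaces.) -/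

import Mathlib

/-!
Since `G(z + τ, μ) = e^{-2πiμ} G(z, μ)`, the product `G(z, μ) G(-z, μ)` is `τ`-periodic. Comparing
the eigenvalue equation at `z` and `z + τ` then shows, for `ρ ≠ 0` and `α = e^{-2πiκ}`, that
`G(-z, κ) = α G(z, κ)`; used at `z = ±λ` this gives `(α² - 1) G(λ, κ) = 0`, impossible when
`2κ ∉ ℤ`. For `ρ = 0` the equation at `z = κ` reads `G(κ, λ) G(-κ, λ) = 0`. Both contradictions
need `ϑ₁'(0) ≠ 0`.

In terms of `θ = jacobiTheta₂`, `ϑ₁(z) = -i e^{πiτ/4 + πiz} θ(z + (1 + τ)/2, τ)`, so this means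
`θ'((1 + τ)/2, τ) ≠ 0`. Splitting the double series of `θ(z, τ) θ(w, τ)` by the parity of the
summation indices gives a duplication formula relating `τ` to `2τ`; differentiated at the zero
`(1 + τ)/2` it shows `θ'((1 + τ)/2, τ) θ(τ/2, τ) = 2 θ'((1 + 2τ)/2, 2τ) θ(1/2, 2τ)`, and at
`(z, w) = (0, 1/2)` it gives `θ(0, τ) θ(1/2, τ) = θ(1/2, 2τ)²`. A zero at `τ` thus propagates to
all `2^k τ`, against the limits `θ(1/2, τ) → 1` and `θ'((1 + τ)/2, τ) → 2πi` as `Im τ → ∞`.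
-/

open Complex

/-- Jacobi's first theta function
`ϑ₁(z,τ) = −∑_{m∈ℤ} exp(πi(m+1/2)²τ + 2πi(m+1/2)(z+1/2))` (here `theta1 τ z = ϑ₁(z,τ)`). -/
noncomputable def theta1 (τ z : ℂ) : ℂ :=
  -∑' m : ℤ, Complex.exp ((Real.pi : ℂ) * Complex.I * ((m : ℂ) + 1 / 2) ^ 2 * τ +
    2 * (Real.pi : ℂ) * Complex.I * ((m : ℂ) + 1 / 2) * (z + 1 / 2))

/-- `G(z,μ) = ϑ₁′(0)ϑ₁(z+μ)/(ϑ₁(z)ϑ₁(μ))`. -/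
noncomputable def Gell (τ z μ : ℂ) : ℂ :=
  deriv (theta1 τ) 0 * theta1 τ (z + μ) / (theta1 τ z * theta1 τ μ)

open Real Filter Topology

def latticeParityEquiv : (ℤ × ℤ) ⊕ (ℤ × ℤ) ≃ ℤ × ℤ where
  toFun := Sum.elim (fun p ↦ (p.1 + p.2, p.1 - p.2)) (fun p ↦ (p.1 + p.2 + 1, p.1 - p.2))
  invFun q := if (q.1 + q.2) % 2 = 0 then .inl ((q.1 + q.2) / 2, (q.1 - q.2) / 2)
    else .inr ((q.1 + q.2 - 1) / 2, (q.1 - q.2 - 1) / 2)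
  left_inv := by
    rintro (⟨a, b⟩ | ⟨a, b⟩)
    · simp only [Sum.elim_inl, show (a + b + (a - b)) % 2 = 0 by omega, if_true, Sum.inl.injEq,
        Prod.mk.injEq]
      omega
    · simp only [Sum.elim_inr, show ¬ (a + b + 1 + (a - b)) % 2 = 0 by omega, if_false,
        Sum.inr.injEq, Prod.mk.injEq]
      omega
  right_inv := by
    rintro ⟨m, n⟩
    by_cases h : (m + n) % 2 = 0 <;> simp only [h, if_true, if_false, Sum.elim_inl,
      Sum.elim_inr, Prod.mk.injEq] <;> omega

lemma summable_norm_jacobiTheta₂_term (z : ℂ) {τ : ℂ} (hτ : 0 < τ.im) :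
    Summable fun n ↦ ‖jacobiTheta₂_term n z τ‖ :=
  summable_norm_iff.mpr (hasSum_jacobiTheta₂_term z hτ).summable

lemma summable_jacobiTheta₂_term_mul (z w : ℂ) {τ : ℂ} (hτ : 0 < τ.im) :
    Summable fun p : ℤ × ℤ ↦ jacobiTheta₂_term p.1 z τ * jacobiTheta₂_term p.2 w τ :=
  summable_mul_of_summable_norm (f := (jacobiTheta₂_term · z τ)) (g := (jacobiTheta₂_term · w τ))
    (summable_norm_jacobiTheta₂_term z hτ) (summable_norm_jacobiTheta₂_term w hτ)

lemma jacobiTheta₂_mul_jacobiTheta₂_eq_tsum (z w : ℂ) {τ : ℂ} (hτ : 0 < τ.im) :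
    jacobiTheta₂ z τ * jacobiTheta₂ w τ =
      ∑' p : ℤ × ℤ, jacobiTheta₂_term p.1 z τ * jacobiTheta₂_term p.2 w τ :=
  tsum_mul_tsum_of_summable_norm (f := (jacobiTheta₂_term · z τ)) (g := (jacobiTheta₂_term · w τ))
    (summable_norm_jacobiTheta₂_term z hτ) (summable_norm_jacobiTheta₂_term w hτ)

lemma jacobiTheta₂_term_add_mul_sub (a b : ℤ) (z w τ : ℂ) :
    jacobiTheta₂_term (a + b) z τ * jacobiTheta₂_term (a - b) w τ =
      jacobiTheta₂_term a (z + w) (2 * τ) * jacobiTheta₂_term b (z - w) (2 * τ) := by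
  simp only [jacobiTheta₂_term, ← Complex.exp_add]
  push_cast
  ring_nf

lemma jacobiTheta₂_term_add_add_one_mul_sub (a b : ℤ) (z w τ : ℂ) :
    jacobiTheta₂_term (a + b + 1) z τ * jacobiTheta₂_term (a - b) w τ =
      cexp (2 * π * I * z + π * I * τ) *
        (jacobiTheta₂_term a (z + w + τ) (2 * τ) * jacobiTheta₂_term b (z - w + τ) (2 * τ)) := by
  simp only [jacobiTheta₂_term, ← Complex.exp_add]
  push_cast
  ring_nf

lemma jacobiTheta₂_mul_jacobiTheta₂ (z w : ℂ) {τ : ℂ} (hτ : 0 < τ.im) :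
    jacobiTheta₂ z τ * jacobiTheta₂ w τ =
      jacobiTheta₂ (z + w) (2 * τ) * jacobiTheta₂ (z - w) (2 * τ) +
        cexp (2 * π * I * z + π * I * τ) *
          (jacobiTheta₂ (z + w + τ) (2 * τ) * jacobiTheta₂ (z - w + τ) (2 * τ)) := by
  have h2τ : 0 < (2 * τ).im := by simp [hτ]
  have hF := latticeParityEquiv.summable_iff.mpr (summable_jacobiTheta₂_term_mul z w hτ)
  rw [Function.comp_def] at hF
  rw [jacobiTheta₂_mul_jacobiTheta₂_eq_tsum z w hτ, ← latticeParityEquiv.tsum_eq,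
    Summable.tsum_sum (hF.comp_injective Sum.inl_injective)
      (hF.comp_injective Sum.inr_injective)]
  simp only [latticeParityEquiv, Equiv.coe_fn_mk, Sum.elim_inl, Sum.elim_inr,
    jacobiTheta₂_term_add_mul_sub, jacobiTheta₂_term_add_add_one_mul_sub]
  rw [tsum_mul_left, jacobiTheta₂_mul_jacobiTheta₂_eq_tsum _ _ h2τ,
    jacobiTheta₂_mul_jacobiTheta₂_eq_tsum _ _ h2τ]

lemma jacobiTheta₂_one_add_div_two_sub (z τ : ℂ) :
    jacobiTheta₂ ((1 + τ) / 2 - z) τ =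
      -cexp (2 * π * I * z) * jacobiTheta₂ (z + (1 + τ) / 2) τ := by
  have h := jacobiTheta₂_add_left' (z - (1 + τ) / 2 + 1) τ
  rw [jacobiTheta₂_add_left, show z - (1 + τ) / 2 + 1 + τ = z + (1 + τ) / 2 by ring] at h
  rw [← jacobiTheta₂_neg_left, neg_sub, h, ← mul_assoc, neg_mul, ← Complex.exp_add,
    show 2 * π * I * z + -π * I * (τ + 2 * (z - (1 + τ) / 2 + 1)) = -(π * I) by ring,
    exp_neg_pi_mul_I, neg_neg, one_mul]

lemma jacobiTheta₂_one_add_div_two (τ : ℂ) : jacobiTheta₂ ((1 + τ) / 2) τ = 0 := by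
  have h := jacobiTheta₂_one_add_div_two_sub 0 τ
  rw [sub_zero, zero_add, mul_zero, Complex.exp_zero] at h
  linear_combination h / 2

lemma jacobiTheta₂_zero_mul_jacobiTheta₂_half {τ : ℂ} (hτ : 0 < τ.im) :
    jacobiTheta₂ 0 τ * jacobiTheta₂ (1 / 2) τ = jacobiTheta₂ (1 / 2) (2 * τ) ^ 2 := by
  rw [jacobiTheta₂_mul_jacobiTheta₂ 0 (1 / 2) hτ, zero_sub, jacobiTheta₂_neg_left,
    show 0 + 1 / 2 + τ = (1 + 2 * τ) / 2 by ring, jacobiTheta₂_one_add_div_two]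
  ring_nf

lemma jacobiTheta₂'_mul_jacobiTheta₂ (z w : ℂ) {τ : ℂ} (hτ : 0 < τ.im) :
    jacobiTheta₂' z τ * jacobiTheta₂ w τ =
      jacobiTheta₂' (z + w) (2 * τ) * jacobiTheta₂ (z - w) (2 * τ) +
        jacobiTheta₂ (z + w) (2 * τ) * jacobiTheta₂' (z - w) (2 * τ) +
        cexp (2 * π * I * z + π * I * τ) *
          (2 * π * I * (jacobiTheta₂ (z + w + τ) (2 * τ) * jacobiTheta₂ (z - w + τ) (2 * τ)) +
            (jacobiTheta₂' (z + w + τ) (2 * τ) * jacobiTheta₂ (z - w + τ) (2 * τ) +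
              jacobiTheta₂ (z + w + τ) (2 * τ) * jacobiTheta₂' (z - w + τ) (2 * τ))) := by
  have h2τ : 0 < (2 * τ).im := by simp [hτ]
  have hθ {f : ℂ → ℂ} (hf : HasDerivAt f 1 z) :
      HasDerivAt (fun x ↦ jacobiTheta₂ (f x) (2 * τ)) (jacobiTheta₂' (f z) (2 * τ)) z := by
    have h := (hasDerivAt_jacobiTheta₂_fst (f z) h2τ).comp z hf
    rw [mul_one] at h
    exact h
  have hid := hasDerivAt_id' z
  have hexp : HasDerivAt (fun x ↦ cexp (2 * π * I * x + π * I * τ))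
      (cexp (2 * π * I * z + π * I * τ) * (2 * π * I)) z := by
    simpa using ((hid.const_mul (2 * π * I)).add_const (π * I * τ)).cexp
  have hR := ((hθ (hid.add_const w)).mul (hθ (hid.sub_const w))).add
    (hexp.mul ((hθ ((hid.add_const w).add_const τ)).mul (hθ ((hid.sub_const w).add_const τ))))
  have hL := (hasDerivAt_jacobiTheta₂_fst z hτ).mul_const (jacobiTheta₂ w τ)
  rw [show (fun x ↦ jacobiTheta₂ x τ * jacobiTheta₂ w τ) = _ from
    funext fun x ↦ jacobiTheta₂_mul_jacobiTheta₂ x w hτ] at hL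
  rw [hL.unique hR, Pi.mul_apply]
  ring

lemma jacobiTheta₂'_one_add_div_two_mul_jacobiTheta₂_div_two {τ : ℂ} (hτ : 0 < τ.im) :
    jacobiTheta₂' ((1 + τ) / 2) τ * jacobiTheta₂ (τ / 2) τ =
      2 * jacobiTheta₂' ((1 + 2 * τ) / 2) (2 * τ) * jacobiTheta₂ (1 / 2) (2 * τ) := by
  have hexp : cexp (2 * π * I * ((1 + τ) / 2) + π * I * τ) * cexp (-π * I * (2 * τ + 2 * (1 / 2)))
      = 1 := by
    rw [← Complex.exp_add, ← Complex.exp_zero]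
    ring_nf
  rw [jacobiTheta₂'_mul_jacobiTheta₂ _ _ hτ, show (1 + τ) / 2 + τ / 2 = (1 + 2 * τ) / 2 by ring,
    show (1 + τ) / 2 - τ / 2 + τ = (1 + 2 * τ) / 2 by ring,
    show (1 + τ) / 2 - τ / 2 = 1 / 2 by ring,
    show (1 + 2 * τ) / 2 + τ = 1 / 2 + 2 * τ by ring, jacobiTheta₂_one_add_div_two,
    jacobiTheta₂_add_left']
  linear_combination jacobiTheta₂' ((1 + 2 * τ) / 2) (2 * τ) * jacobiTheta₂ (1 / 2) (2 * τ) * hexp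

lemma eventually_one_le_im : ∀ᶠ τ : ℂ in comap im atTop, 1 ≤ τ.im :=
  tendsto_comap.eventually (eventually_ge_atTop 1)

lemma tendsto_exp_neg_mul_im {c : ℝ} (hc : 0 < c) :
    Tendsto (fun τ : ℂ ↦ rexp (-c * τ.im)) (comap im atTop) (𝓝 0) :=
  Real.tendsto_exp_atBot.comp (tendsto_comap.const_mul_atTop_of_neg (neg_neg_of_pos hc))

lemma tendsto_jacobiTheta₂_half_at_im_infty :
    Tendsto (jacobiTheta₂ (1 / 2)) (comap im atTop) (𝓝 1) := by
  have hsum : Summable fun n : ℤ ↦ rexp (-π * (1 * n ^ 2 - 2 * 0 * |n|)) := by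
    simpa using summable_pow_mul_jacobiTheta₂_term_bound 0 one_pos 0
  have hlim (n : ℤ) : Tendsto (fun τ ↦ jacobiTheta₂_term n (1 / 2) τ) (comap im atTop)
      (𝓝 (if n = 0 then 1 else 0)) := by
    split_ifs with hn
    · simp [hn, jacobiTheta₂_term, tendsto_const_nhds]
    · rw [tendsto_zero_iff_norm_tendsto_zero]
      simp_rw [norm_jacobiTheta₂_term]
      convert tendsto_exp_neg_mul_im (c := π * n ^ 2) (by positivity) using 2
      simp
  have h := tendsto_tsum_of_dominated_convergence hsum hlim <|
    eventually_one_le_im.mono fun τ hτ n ↦ norm_jacobiTheta₂_term_le one_pos (by simp) hτ n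
  rwa [tsum_ite_eq] at h

lemma jacobiTheta₂'_term_neg_one (τ : ℂ) :
    jacobiTheta₂'_term (-1) ((1 + τ) / 2) τ = 2 * π * I := by
  rw [jacobiTheta₂'_term, jacobiTheta₂_term, show 2 * π * I * ((-1 : ℤ) : ℂ) * ((1 + τ) / 2) +
    π * I * ((-1 : ℤ) : ℂ) ^ 2 * τ = -(π * I) by push_cast; ring, exp_neg_pi_mul_I]
  push_cast
  ring

lemma norm_jacobiTheta₂'_term_one_add_div_two (n : ℤ) (τ : ℂ) :
    ‖jacobiTheta₂'_term n ((1 + τ) / 2) τ‖ =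
      2 * π * |(n : ℝ)| * rexp (-π * (n * (n + 1)) * τ.im) := by
  rw [jacobiTheta₂'_term, norm_mul, norm_jacobiTheta₂_term]
  congr 2
  · simp [abs_of_pos pi_pos]
  · simp
    ring

lemma Int.cast_mul_add_one_nonneg (n : ℤ) : (0 : ℝ) ≤ n * (n + 1) := by
  have : 0 ≤ n * (n + 1) := by rcases le_or_gt 0 n with h | h <;> nlinarith
  exact_mod_cast this

lemma tendsto_jacobiTheta₂'_one_add_div_two_at_im_infty :
    Tendsto (fun τ ↦ jacobiTheta₂' ((1 + τ) / 2) τ) (comap im atTop) (𝓝 (2 * π * I)) := by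
  have hsum : Summable fun n : ℤ ↦ 2 * π * |(n : ℝ)| * rexp (-π * (n * (n + 1))) := by
    refine ((summable_pow_mul_jacobiTheta₂_term_bound (1 / 2) one_pos 1).mul_left
      (2 * π)).of_nonneg_of_le (fun n ↦ by positivity) fun n ↦ ?_
    rw [pow_one, Int.cast_abs, ← mul_assoc (2 * π)]
    gcongr 2 * π * |(n : ℝ)| * rexp ?_
    nlinarith [mul_le_mul_of_nonneg_left (neg_abs_le (n : ℝ)) pi_pos.le]
  have hlim (n : ℤ) : Tendsto (fun τ ↦ jacobiTheta₂'_term n ((1 + τ) / 2) τ) (comap im atTop)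
      (𝓝 (if n = -1 then 2 * π * I else 0)) := by
    split_ifs with hn
    · simp [hn, jacobiTheta₂'_term_neg_one, tendsto_const_nhds]
    rcases eq_or_ne n 0 with rfl | hn0
    · simp [jacobiTheta₂'_term, tendsto_const_nhds]
    rw [tendsto_zero_iff_norm_tendsto_zero]
    simp_rw [norm_jacobiTheta₂'_term_one_add_div_two]
    have hpos : (0 : ℝ) < n * (n + 1) := by
      have : 0 < n * (n + 1) := by
        rcases lt_or_gt_of_ne hn0 with h | h
        · exact mul_pos_of_neg_of_neg h (by omega)
        · exact mul_pos h (by omega)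
      exact_mod_cast this
    simpa using (tendsto_exp_neg_mul_im (mul_pos pi_pos hpos)).const_mul (2 * π * |(n : ℝ)|)
  have hbound : ∀ᶠ τ : ℂ in comap im atTop, ∀ n : ℤ,
      ‖jacobiTheta₂'_term n ((1 + τ) / 2) τ‖ ≤ 2 * π * |(n : ℝ)| * rexp (-π * (n * (n + 1))) := by
    refine eventually_one_le_im.mono fun τ hτ n ↦ ?_
    rw [norm_jacobiTheta₂'_term_one_add_div_two]
    refine mul_le_mul_of_nonneg_left (Real.exp_le_exp.mpr ?_) (by positivity)
    nlinarith [mul_le_mul_of_nonneg_left hτ (mul_nonneg pi_pos.le (Int.cast_mul_add_one_nonneg n))]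
  have h := tendsto_tsum_of_dominated_convergence hsum hlim hbound
  rwa [tsum_ite_eq] at h

lemma of_eventually_im_of_two_mul {P : ℂ → Prop} (hP : ∀ᶠ τ in comap im atTop, P τ)
    (h2 : ∀ τ : ℂ, 0 < τ.im → P (2 * τ) → P τ) {τ : ℂ} (hτ : 0 < τ.im) : P τ := by
  have hlim : Tendsto (fun k : ℕ ↦ 2 ^ k * τ) atTop (comap im atTop) := by
    have him (k : ℕ) : (2 ^ k * τ).im = 2 ^ k * τ.im := by
      exact_mod_cast Complex.im_ofReal_mul (2 ^ k) τ
    refine tendsto_comap_iff.mpr ?_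
    simpa [Function.comp_def, him] using
      (tendsto_pow_atTop_atTop_of_one_lt one_lt_two).atTop_mul_const hτ
  obtain ⟨k, hk⟩ := (hlim.eventually hP).exists
  clear hlim
  induction k generalizing τ with
  | zero => simpa using hk
  | succ k ih =>
    rw [pow_succ, mul_assoc] at hk
    exact h2 τ hτ (ih (by simpa using hτ) hk)

lemma jacobiTheta₂_half_ne_zero {τ : ℂ} (hτ : 0 < τ.im) : jacobiTheta₂ (1 / 2) τ ≠ 0 := by
  refine of_eventually_im_of_two_mul
    (tendsto_jacobiTheta₂_half_at_im_infty.eventually_ne one_ne_zero) (fun τ hτ h2 h ↦ ?_) hτ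
  have := jacobiTheta₂_zero_mul_jacobiTheta₂_half hτ
  rw [h, mul_zero, eq_comm, sq_eq_zero_iff] at this
  exact h2 this

lemma jacobiTheta₂'_one_add_div_two_ne_zero {τ : ℂ} (hτ : 0 < τ.im) :
    jacobiTheta₂' ((1 + τ) / 2) τ ≠ 0 := by
  refine of_eventually_im_of_two_mul (P := fun τ ↦ jacobiTheta₂' ((1 + τ) / 2) τ ≠ 0)
    (tendsto_jacobiTheta₂'_one_add_div_two_at_im_infty.eventually_ne (by simp [pi_ne_zero]))
    (fun τ hτ h2 h ↦ ?_) hτ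
  have := jacobiTheta₂'_one_add_div_two_mul_jacobiTheta₂_div_two hτ
  rw [h, zero_mul, eq_comm, mul_eq_zero, mul_eq_zero, or_assoc] at this
  exact h2 <| (this.resolve_left two_ne_zero).resolve_right
    (jacobiTheta₂_half_ne_zero (by simpa using hτ))

lemma theta1_eq_jacobiTheta₂ (τ z : ℂ) :
    theta1 τ z = -I * cexp (π * I * τ / 4 + π * I * z) * jacobiTheta₂ (z + (1 + τ) / 2) τ := by
  rw [theta1, jacobiTheta₂, ← tsum_mul_left, ← tsum_neg]
  refine tsum_congr fun n ↦ ?_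
  have h : cexp (π * I * (n + 1 / 2) ^ 2 * τ + 2 * π * I * (n + 1 / 2) * (z + 1 / 2)) =
      cexp (π / 2 * I) * cexp (π * I * τ / 4 + π * I * z) *
        jacobiTheta₂_term n (z + (1 + τ) / 2) τ := by
    rw [jacobiTheta₂_term, ← Complex.exp_add, ← Complex.exp_add]
    ring_nf
  rw [h, exp_pi_div_two_mul_I]
  ring

lemma theta1_zero (τ : ℂ) : theta1 τ 0 = 0 := by
  rw [theta1_eq_jacobiTheta₂, zero_add, jacobiTheta₂_one_add_div_two, mul_zero]

lemma theta1_neg (τ z : ℂ) : theta1 τ (-z) = -theta1 τ z := by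
  have h : cexp (π * I * τ / 4 + π * I * -z) * cexp (2 * π * I * z) =
      cexp (π * I * τ / 4 + π * I * z) := by
    rw [← Complex.exp_add]
    ring_nf
  rw [theta1_eq_jacobiTheta₂, theta1_eq_jacobiTheta₂,
    show -z + (1 + τ) / 2 = (1 + τ) / 2 - z by ring, jacobiTheta₂_one_add_div_two_sub]
  linear_combination I * jacobiTheta₂ (z + (1 + τ) / 2) τ * h

lemma theta1_neg_ne_zero {τ z : ℂ} (hz : theta1 τ z ≠ 0) : theta1 τ (-z) ≠ 0 := by
  rwa [theta1_neg, neg_ne_zero]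

lemma theta1_add_period (τ z : ℂ) :
    theta1 τ (z + τ) = -cexp (-π * I * τ - 2 * π * I * z) * theta1 τ z := by
  have h : cexp (π * I * τ / 4 + π * I * (z + τ)) *
      cexp (-π * I * (τ + 2 * (z + (1 + τ) / 2))) = cexp (-(π * I)) *
        (cexp (-π * I * τ - 2 * π * I * z) * cexp (π * I * τ / 4 + π * I * z)) := by
    simp only [← Complex.exp_add]
    ring_nf
  rw [exp_neg_pi_mul_I] at h
  rw [theta1_eq_jacobiTheta₂, theta1_eq_jacobiTheta₂, add_right_comm, jacobiTheta₂_add_left']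
  linear_combination -I * jacobiTheta₂ (z + (1 + τ) / 2) τ * h

lemma theta1_add_period_ne_zero {τ z : ℂ} (hz : theta1 τ z ≠ 0) : theta1 τ (z + τ) ≠ 0 := by
  rw [theta1_add_period]
  exact mul_ne_zero (neg_ne_zero.mpr (Complex.exp_ne_zero _)) hz

lemma hasDerivAt_theta1_zero {τ : ℂ} (hτ : 0 < τ.im) :
    HasDerivAt (theta1 τ) (-I * cexp (π * I * τ / 4) * jacobiTheta₂' ((1 + τ) / 2) τ) 0 := by
  have hexp : HasDerivAt (fun z ↦ -I * cexp (π * I * τ / 4 + π * I * z))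
      (-I * (cexp (π * I * τ / 4 + π * I * 0) * (π * I))) 0 := by
    simpa using
      (((hasDerivAt_id' (0 : ℂ)).const_mul (π * I)).const_add (π * I * τ / 4)).cexp.const_mul (-I)
  have hθ := (hasDerivAt_jacobiTheta₂_fst (0 + (1 + τ) / 2) hτ).comp_add_const 0 ((1 + τ) / 2)
  rw [show theta1 τ = _ from funext (theta1_eq_jacobiTheta₂ τ)]
  refine (hexp.mul hθ).congr_deriv ?_
  rw [zero_add, jacobiTheta₂_one_add_div_two, mul_zero, zero_add, mul_zero, add_zero]

lemma deriv_theta1_zero_ne_zero {τ : ℂ} (hτ : 0 < τ.im) : deriv (theta1 τ) 0 ≠ 0 := by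
  rw [(hasDerivAt_theta1_zero hτ).deriv]
  exact mul_ne_zero (mul_ne_zero (neg_ne_zero.mpr I_ne_zero) (Complex.exp_ne_zero _))
    (jacobiTheta₂'_one_add_div_two_ne_zero hτ)

lemma Gell_add_period (τ z μ : ℂ) : Gell τ (z + τ) μ = cexp (-2 * π * I * μ) * Gell τ z μ := by
  have h : cexp (-π * I * τ - 2 * π * I * (z + μ)) =
      cexp (-2 * π * I * μ) * cexp (-π * I * τ - 2 * π * I * z) := by
    rw [← Complex.exp_add]
    ring_nf
  rw [Gell, Gell, add_right_comm, theta1_add_period, theta1_add_period, h]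
  field_simp

lemma Gell_mul_Gell_neg_add_period (τ z μ : ℂ) :
    Gell τ (z + τ) μ * Gell τ (-(z + τ)) μ = Gell τ z μ * Gell τ (-z) μ := by
  have h := Gell_add_period τ (-(z + τ)) μ
  rw [show -(z + τ) + τ = -z by ring] at h
  rw [Gell_add_period, h]
  ring

lemma Gell_neg_self (τ μ : ℂ) : Gell τ (-μ) μ = 0 := by
  rw [Gell, neg_add_cancel, theta1_zero, mul_zero, zero_div]

lemma Gell_ne_zero {τ z μ : ℂ} (hτ : 0 < τ.im) (hz : theta1 τ z ≠ 0) (hμ : theta1 τ μ ≠ 0)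
    (hzμ : theta1 τ (z + μ) ≠ 0) : Gell τ z μ ≠ 0 :=
  div_ne_zero (mul_ne_zero (deriv_theta1_zero_ne_zero hτ) hzμ) (mul_ne_zero hz hμ)

lemma Gell_neg_eq_of_eigenvalue {τ lam κ ρ : ℂ} (hρ : ρ ≠ 0) (hκ : cexp (-2 * π * I * κ) ≠ 1)
    (h : ∀ z : ℂ, theta1 τ z ≠ 0 →
      Gell τ z lam * Gell τ (-z) lam = (Gell τ z κ + ρ) * (Gell τ (-z) κ + ρ))
    {z : ℂ} (hz : theta1 τ z ≠ 0) :
    Gell τ (-z) κ = cexp (-2 * π * I * κ) * Gell τ z κ := by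
  have h₁ := h z hz
  have h₂ := h (z + τ) (theta1_add_period_ne_zero hz)
  rw [Gell_mul_Gell_neg_add_period] at h₂
  have hκ₁ := Gell_add_period τ z κ
  have hκ₂ := Gell_add_period τ (-(z + τ)) κ
  rw [show -(z + τ) + τ = -z by ring] at hκ₂
  have hprod := Gell_mul_Gell_neg_add_period τ z κ
  have : ρ * (cexp (-2 * π * I * κ) - 1) *
      (Gell τ (-z) κ - cexp (-2 * π * I * κ) * Gell τ z κ) = 0 := by
    linear_combination cexp (-2 * π * I * κ) * (h₂ - h₁ + hprod + ρ * hκ₁) - ρ * hκ₂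
  rcases mul_eq_zero.mp this with h | h
  · exact absurd h (mul_ne_zero hρ (sub_ne_zero.mpr hκ))
  · exact sub_eq_zero.mp h

lemma cexp_sq_ne_one_of_two_mul_ne_int {κ : ℂ} (h : ∀ m : ℤ, 2 * κ ≠ m) :
    cexp (-2 * π * I * κ) ^ 2 ≠ 1 := by
  rw [← Complex.exp_nat_mul, Ne, Complex.exp_eq_one_iff]
  rintro ⟨n, hn⟩
  refine h (-n) ?_
  have h2π : 2 * π * I ≠ 0 := by simp [pi_ne_zero]
  apply mul_left_cancel₀ h2π
  push_cast at hn ⊢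
  linear_combination -hn

/-- The elliptic Shibukawa–Ueno operator has no eigenvalues: there is no `ρ ∈ ℂ`
with `G(z,λ)G(−z,λ) = (G(z,κ)+ρ)(G(−z,κ)+ρ)` for all `z` with `ϑ₁(z) ≠ 0`. -/
theorem no_eigenvalue_elliptic (τ : ℂ) (hτ : 0 < τ.im) (lam κ : ℂ)
    (hlam : theta1 τ lam ≠ 0) (hκ : theta1 τ κ ≠ 0)
    (hsum : theta1 τ (κ + lam) ≠ 0) (hdiff : theta1 τ (κ - lam) ≠ 0)
    (hlat : ¬∃ m l : ℤ, 2 * κ = (m : ℂ) + τ * (l : ℂ)) :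
    ¬∃ ρ : ℂ, ∀ z : ℂ, theta1 τ z ≠ 0 →
      Gell τ z lam * Gell τ (-z) lam = (Gell τ z κ + ρ) * (Gell τ (-z) κ + ρ) := by
  rintro ⟨ρ, hρ⟩
  rcases eq_or_ne ρ 0 with rfl | hρ0
  · have h := hρ κ hκ
    rw [Gell_neg_self, add_zero, add_zero, mul_zero] at h
    refine mul_ne_zero (Gell_ne_zero hτ hκ hlam hsum)
      (Gell_ne_zero hτ (theta1_neg_ne_zero hκ) hlam ?_) h
    rw [neg_add_eq_sub, ← neg_sub]
    exact theta1_neg_ne_zero hdiff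
  · set α := cexp (-2 * π * I * κ)
    have hα : α ^ 2 ≠ 1 := cexp_sq_ne_one_of_two_mul_ne_int fun m hm ↦ hlat ⟨m, 0, by simp [hm]⟩
    have hα₁ : α ≠ 1 := fun h ↦ hα (by rw [h, one_pow])
    have h₁ := Gell_neg_eq_of_eigenvalue hρ0 hα₁ hρ hlam
    have h₂ := Gell_neg_eq_of_eigenvalue hρ0 hα₁ hρ (theta1_neg_ne_zero hlam)
    rw [neg_neg] at h₂
    have h : (α ^ 2 - 1) * Gell τ lam κ = 0 := by linear_combination -h₂ - α * h₁
    exact Gell_ne_zero hτ hlam hκ (by rwa [add_comm]) <|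
      (mul_eq_zero.mp h).resolve_left (sub_ne_zero.mpr hα)
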